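/- arXiv:1708.04674 — 2 statements merged into one kernel-verified Lean document; each statement's English description precedes it below -/
import Mathlib

section
/- Let D be a strongly connected balanced bipartite digraph with partite sets of cardinality a ≥ 3, satisfying condition A (d(u)+d(v) ≥ 3a for every pair of distinct vertices u, v with a common in-neighbour or a common out-neighbour). Suppose D contains a Hamiltonian cycle, every vertex has out-degree at most a−1 and in-degree at most a−1, and D is not itself a directed cycle of length 2a. Then for every vertex u there exists a vertex v ≠ u such that u and v have a common in-neighbour or a common out-neighbour. -/
/-- Out-degree of `u` in the digraph with arc relation `A`. -/
noncomputable def outDeg {V : Type} (A : V → V → Prop) (u : V) : ℕ := {w | A u w}.ncard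

/-- In-degree of `u` in the digraph with arc relation `A`. -/
noncomputable def inDeg {V : Type} (A : V → V → Prop) (u : V) : ℕ := {w | A w u}.ncard

/-- Degree of `u`: `d(u) = d⁺(u) + d⁻(u)`. -/
noncomputable def deg {V : Type} (A : V → V → Prop) (u : V) : ℕ := outDeg A u + inDeg A u

theorem stmt0 {V : Type} [Fintype V] [DecidableEq V]
    (A : V → V → Prop) (X Y : Finset V) (a : ℕ) (ha : 3 ≤ a)
    (hdisj : Disjoint X Y) (hcover : X ∪ Y = Finset.univ)
    (hX : X.card = a) (hY : Y.card = a)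
    (hXind : ∀ u ∈ X, ∀ v ∈ X, ¬ A u v)
    (hYind : ∀ u ∈ Y, ∀ v ∈ Y, ¬ A u v)
    (hconn : ∀ u v : V, Relation.ReflTransGen A u v)
    (hcondA : ∀ u v : V, u ≠ v →
      ((∃ w, A w u ∧ A w v) ∨ (∃ w, A u w ∧ A v w)) →
      3 * a ≤ deg A u + deg A v)
    (hham : ∃ f : ZMod (2 * a) → V, Function.Bijective f ∧ ∀ i, A (f i) (f (i + 1)))
    (hdeg : ∀ u : V, outDeg A u ≤ a - 1 ∧ inDeg A u ≤ a - 1)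
    (hnotcyc : ¬ ∃ f : ZMod (2 * a) → V, Function.Bijective f ∧
      ∀ u v : V, A u v ↔ ∃ i, u = f i ∧ v = f (i + 1)) :
    ∀ u : V, ∃ v : V, v ≠ u ∧
      ((∃ w, A w u ∧ A w v) ∨ (∃ w, A u w ∧ A v w)) := by
  haveI h2a : NeZero (2 * a) := ⟨by omega⟩
  obtain ⟨f, hfbij, hf⟩ := hham
  set fails : V → Prop := fun u => ∀ v, v ≠ u →
    ¬ ((∃ w, A w u ∧ A w v) ∨ (∃ w, A u w ∧ A v w)) with hfailsdef
  have step : ∀ u w : V, fails u → A u w → fails w := by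
    intro u w hfu hA
    have hset : {z | A z w} = {u} := by
      ext z
      simp only [Set.mem_setOf_eq, Set.mem_singleton_iff]
      constructor
      · intro hz
        by_contra hne
        exact hfu z hne (Or.inr ⟨w, hA, hz⟩)
      · intro h; subst h; exact hA
    have hin : inDeg A w = 1 := by
      unfold inDeg; rw [hset, Set.ncard_singleton]
    intro v hvw hcom
    have hc := hcondA w v (Ne.symm hvw) hcom
    have h1 := (hdeg w).1
    have h2 := (hdeg v).1
    have h3 := (hdeg v).2
    unfold deg at hc
    omega
  intro u
  by_contra hcon
  push_neg at hcon
  have hu : fails u := by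
    rintro v hv (⟨w, h1, h2⟩ | ⟨w, h1, h2⟩)
    · exact (hcon v hv).1 w h1 h2
    · exact (hcon v hv).2 w h1 h2
  obtain ⟨i₀, hi₀⟩ := hfbij.2 u
  have chain : ∀ k : ℕ, fails (f (i₀ + (k : ZMod (2 * a)))) := by
    intro k
    induction k with
    | zero => simpa [hi₀] using hu
    | succ k ih =>
      have := step _ _ ih (hf (i₀ + (k : ZMod (2 * a))))
      have heq : (i₀ + (k : ZMod (2 * a))) + 1 = i₀ + ((k + 1 : ℕ) : ZMod (2 * a)) := by
        push_cast; ring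
      rwa [heq] at this
  have allfail : ∀ v, fails v := by
    intro v
    obtain ⟨j, hj⟩ := hfbij.2 v
    have := chain (j - i₀).val
    rw [ZMod.natCast_val, ZMod.cast_id, add_sub_cancel, hj] at this
    exact this
  exact absurd ⟨f, hfbij, fun x y => by
    constructor
    · intro hA
      obtain ⟨i, hi⟩ := hfbij.2 x
      refine ⟨i, hi.symm, ?_⟩
      by_contra hne
      exact allfail (f (i + 1)) y hne (Or.inl ⟨x, by rw [← hi]; exact hf i, hA⟩)
    · rintro ⟨i, rfl, rfl⟩
      exact hf i⟩ hnotcyc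
end

section
/- Let D be a balanced bipartite digraph with partite sets X = {x₁,...,x_a}, Y = {y₁,...,y_a}, a ≥ 3, such that: (i) d(u)+d(v) ≥ 3a for every pair of distinct vertices u, v in the same partite set; (ii) d⁺(u) ≤ a−1 and d⁻(u) ≤ a−1 for every vertex u. Define G₁ on vertices {v₁,...,v_a} with arc v_i v_j (i ≠ j) iff x_i y_j ∈ A(D). Then for any two distinct vertices v_i, v_j of G₁: d_{G₁}(v_i) + d_{G₁}(v_j) ≥ 2a. -/
theorem stmt5 {V : Type} (a : ℕ) (ha : 3 ≤ a)
    (A : V → V → Prop) (x y : ZMod a → V)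
    (hxinj : Function.Injective x) (hyinj : Function.Injective y)
    (hxy : ∀ i j, x i ≠ y j)
    (hcover : ∀ v : V, (∃ i, v = x i) ∨ (∃ i, v = y i))
    (hXind : ∀ i j, ¬ A (x i) (x j))
    (hYind : ∀ i j, ¬ A (y i) (y j))
    (hsumx : ∀ i j : ZMod a, i ≠ j → 3 * a ≤ deg A (x i) + deg A (x j))
    (hsumy : ∀ i j : ZMod a, i ≠ j → 3 * a ≤ deg A (y i) + deg A (y j))
    (hdeg : ∀ u : V, outDeg A u ≤ a - 1 ∧ inDeg A u ≤ a - 1) :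
    ∀ i j : ZMod a, i ≠ j →
      2 * a ≤ deg (fun p q : ZMod a => p ≠ q ∧ A (x p) (y q)) i +
              deg (fun p q : ZMod a => p ≠ q ∧ A (x p) (y q)) j := by
  intro i j hij
  haveI : NeZero a := ⟨by omega⟩
  set B : ZMod a → ZMod a → Prop := fun p q => p ≠ q ∧ A (x p) (y q) with hB
  have hout : ∀ k : ZMod a, outDeg A (x k) = {q : ZMod a | A (x k) (y q)}.ncard := by
    intro k
    have himg : {v | A (x k) v} = y '' {q | A (x k) (y q)} := by
      ext v
      constructor
      · intro hv
        rcases hcover v with ⟨m, rfl⟩ | ⟨m, rfl⟩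
        · exact absurd hv (hXind k m)
        · exact ⟨m, hv, rfl⟩
      · rintro ⟨m, hm, rfl⟩; exact hm
    rw [outDeg, himg, Set.ncard_image_of_injective _ hyinj]
  have hin : ∀ k : ZMod a, inDeg A (y k) = {p : ZMod a | A (x p) (y k)}.ncard := by
    intro k
    have himg : {v | A v (y k)} = x '' {p | A (x p) (y k)} := by
      ext v
      constructor
      · intro hv
        rcases hcover v with ⟨m, rfl⟩ | ⟨m, rfl⟩
        · exact ⟨m, hv, rfl⟩
        · exact absurd hv (hYind m k)
      · rintro ⟨m, hm, rfl⟩; exact hm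
    rw [inDeg, himg, Set.ncard_image_of_injective _ hxinj]
  have hkey1 : ∀ k : ZMod a, {q : ZMod a | A (x k) (y q)}.ncard ≤ outDeg B k + 1 := by
    intro k
    have hsub : {q : ZMod a | A (x k) (y q)} ⊆ {q | B k q} ∪ {k} := by
      intro q hq
      by_cases h : k = q
      · right; simp [h]
      · left; exact ⟨h, hq⟩
    calc {q : ZMod a | A (x k) (y q)}.ncard
        ≤ ({q | B k q} ∪ {k}).ncard := Set.ncard_le_ncard hsub (Set.toFinite _)
      _ ≤ {q | B k q}.ncard + ({k} : Set (ZMod a)).ncard := Set.ncard_union_le _ _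
      _ = outDeg B k + 1 := by rw [Set.ncard_singleton]; rfl
  have hkey2 : ∀ k : ZMod a, {p : ZMod a | A (x p) (y k)}.ncard ≤ inDeg B k + 1 := by
    intro k
    have hsub : {p : ZMod a | A (x p) (y k)} ⊆ {p | B p k} ∪ {k} := by
      intro p hp
      by_cases h : p = k
      · right; simp [h]
      · left; exact ⟨h, hp⟩
    calc {p : ZMod a | A (x p) (y k)}.ncard
        ≤ ({p | B p k} ∪ {k}).ncard := Set.ncard_le_ncard hsub (Set.toFinite _)
      _ ≤ {p | B p k}.ncard + ({k} : Set (ZMod a)).ncard := Set.ncard_union_le _ _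
      _ = inDeg B k + 1 := by rw [Set.ncard_singleton]; rfl
  have h1 := hsumx i j hij
  have h2 := hsumy i j hij
  have hxi := hdeg (x i)
  have hxj := hdeg (x j)
  have hyi := hdeg (y i)
  have hyj := hdeg (y j)
  have e1 : deg A (x i) = {q : ZMod a | A (x i) (y q)}.ncard + inDeg A (x i) := by
    rw [deg, hout i]
  have e2 : deg A (x j) = {q : ZMod a | A (x j) (y q)}.ncard + inDeg A (x j) := by
    rw [deg, hout j]
  have e3 : deg A (y i) = outDeg A (y i) + {p : ZMod a | A (x p) (y i)}.ncard := by
    rw [deg, hin i]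
  have e4 : deg A (y j) = outDeg A (y j) + {p : ZMod a | A (x p) (y j)}.ncard := by
    rw [deg, hin j]
  have k1 := hkey1 i
  have k2 := hkey1 j
  have k3 := hkey2 i
  have k4 := hkey2 j
  have dBi : deg B i = outDeg B i + inDeg B i := rfl
  have dBj : deg B j = outDeg B j + inDeg B j := rfl
  show 2 * a ≤ deg B i + deg B j
  omega
end
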